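/- Let N ≥ 1 and m ≥ 3. The kernel of the reduction homomorphism GL_N(ℤ) → GL_N(ℤ/mℤ) is torsion-free. -/

import Mathlib

/-!
Reduce to an element `A = 1 + M` of prime order `p` with `m` dividing every entry of `M ≠ 0`,
and let `q ≥ m ≥ 3` be the gcd of the entries of `M`. Expanding `(1 + M)^p = 1` gives
`p M = -∑_{k ≥ 2} C(p,k) M^k`, whose right side is divisible by `q²`; hence `q ∣ p`, so `q = p`.
But then `p ∣ C(p,2)` and `p ≥ 3` make the right side divisible by `p³`, so `p²` divides every
entry of `M`, i.e. `p² ∣ q = p`, which is absurd.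
-/

open Finset

theorem Submonoid.eq_one_of_isOfFinOrder_of_forall_pow_prime {M : Type*} [Monoid M]
    {S : Submonoid M} (hS : ∀ y ∈ S, ∀ p : ℕ, p.Prime → y ^ p = 1 → y = 1) {x : M}
    (hx : x ∈ S) (hfin : IsOfFinOrder x) : x = 1 := by
  by_contra hx1
  set n := orderOf x
  have hn0 : n ≠ 0 := hfin.orderOf_pos.ne'
  have hn1 : n ≠ 1 := mt orderOf_eq_one_iff.mp hx1
  set p := n.minFac
  have hp : p.Prime := Nat.minFac_prime hn1
  have hord : orderOf (x ^ (n / p)) = p := orderOf_pow_orderOf_div hn0 (Nat.minFac_dvd n)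
  have hpow : (x ^ (n / p)) ^ p = 1 := by
    simpa only [hord] using pow_orderOf_eq_one (x ^ (n / p))
  have h1 : x ^ (n / p) = 1 := hS _ (pow_mem hx _) p hp hpow
  rw [h1, orderOf_one] at hord
  exact hp.one_lt.ne hord

theorem nsmul_add_sum_choose_nsmul_pow_eq_zero {R : Type*} [Ring R] {x : R} {p : ℕ}
    (hp : 1 ≤ p) (h : (1 + x) ^ p = 1) :
    p • x + ∑ k ∈ Ico 2 (p + 1), p.choose k • x ^ k = 0 := by
  have hbinom : (1 + x) ^ p = ∑ k ∈ range (p + 1), p.choose k • x ^ k := by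
    rw [add_comm, (Commute.one_right x).add_pow]
    exact sum_congr rfl fun k _ => by rw [one_pow, mul_one, nsmul_eq_mul']
  rw [hbinom, range_eq_Ico, sum_eq_sum_Ico_succ_bot (by omega),
    sum_eq_sum_Ico_succ_bot (by omega)] at h
  simpa [add_assoc] using h

namespace Matrix

section Content

variable {m n : Type*} [Fintype m] [Fintype n]

def content (M : Matrix m n ℤ) : ℕ :=
  univ.gcd fun ij : m × n => (M ij.1 ij.2).natAbs

theorem dvd_content_iff {M : Matrix m n ℤ} {d : ℕ} :
    d ∣ M.content ↔ ∀ i j, (d : ℤ) ∣ M i j := by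
  simp only [content, Finset.dvd_gcd_iff, mem_univ, true_implies, Prod.forall, Int.natCast_dvd]

theorem content_eq_zero_iff {M : Matrix m n ℤ} : M.content = 0 ↔ M = 0 := by
  simp only [content, Finset.gcd_eq_zero_iff, mem_univ, true_implies, Prod.forall,
    Int.natAbs_eq_zero, ← Matrix.ext_iff, zero_apply]

theorem content_natCast_smul (c : ℕ) (M : Matrix m n ℤ) :
    ((c : ℤ) • M).content = c * M.content := by
  simp only [content, smul_apply, smul_eq_mul, Int.natAbs_mul, Int.natAbs_natCast,
    Finset.gcd_mul_left, normalize_eq]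

end Content

variable {n : Type*} [Fintype n] [DecidableEq n]

theorem pow_dvd_pow_apply {R : Type*} [CommSemiring R] {q : R} {M : Matrix n n R}
    (h : ∀ i j, q ∣ M i j) (k : ℕ) (i j : n) : q ^ k ∣ (M ^ k) i j := by
  induction k generalizing j with
  | zero => simp
  | succ k ih =>
    rw [pow_succ, pow_succ, mul_apply]
    exact dvd_sum fun l _ => mul_dvd_mul (ih l) (h l j)

theorem dvd_natCast_mul_apply_of_one_add_pow_eq_one {R : Type*} [CommRing R]
    {M : Matrix n n R} {p : ℕ} (hp : 1 ≤ p) (h : (1 + M) ^ p = 1) {d : R}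
    (hd : ∀ k ∈ Ico 2 (p + 1), ∀ i j, d ∣ p.choose k * (M ^ k) i j) (i j : n) :
    d ∣ p * M i j := by
  have hij := congr_fun₂ (nsmul_add_sum_choose_nsmul_pow_eq_zero (x := M) hp h) i j
  simp only [add_apply, sum_apply, smul_apply, zero_apply] at hij
  simp only [nsmul_eq_mul] at hij
  exact (dvd_add_left (dvd_sum fun k hk => hd k hk i j)).mp (hij ▸ dvd_zero d)

theorem sq_dvd_natCast_mul_apply_of_one_add_pow_eq_one {R : Type*} [CommRing R]
    {M : Matrix n n R} {p : ℕ} (hp : 1 ≤ p) (h : (1 + M) ^ p = 1) {q : R}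
    (hqM : ∀ i j, q ∣ M i j) (i j : n) : q ^ 2 ∣ p * M i j :=
  dvd_natCast_mul_apply_of_one_add_pow_eq_one hp h (fun k hk i j =>
    dvd_mul_of_dvd_right ((pow_dvd_pow _ (mem_Ico.mp hk).1).trans (pow_dvd_pow_apply hqM k i j)) _)
    i j

theorem sq_dvd_apply_of_one_add_pow_prime_eq_one {M : Matrix n n ℤ} {p : ℕ} (hp : p.Prime)
    (hp2 : 2 < p) (h : (1 + M) ^ p = 1) (hpM : ∀ i j, (p : ℤ) ∣ M i j) (i j : n) :
    (p : ℤ) ^ 2 ∣ M i j := by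
  have hp3 : (p : ℤ) * p ^ 2 ∣ p * M i j := by
    refine dvd_natCast_mul_apply_of_one_add_pow_eq_one hp.pos h (fun k hk i j => ?_) i j
    obtain rfl | hk3 : k = 2 ∨ 3 ≤ k := by grind
    · exact mul_dvd_mul (Int.natCast_dvd_natCast.mpr (hp.dvd_choose_self two_ne_zero hp2))
        (pow_dvd_pow_apply hpM 2 i j)
    · rw [← pow_succ']
      exact dvd_mul_of_dvd_right ((pow_dvd_pow _ hk3).trans (pow_dvd_pow_apply hpM k i j)) _
  exact (mul_dvd_mul_iff_left (by exact_mod_cast hp.ne_zero)).mp hp3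

theorem eq_zero_of_one_add_pow_prime_eq_one {m : ℕ} (hm : 3 ≤ m) {M : Matrix n n ℤ}
    (hmM : ∀ i j, (m : ℤ) ∣ M i j) {p : ℕ} (hp : p.Prime) (h : (1 + M) ^ p = 1) :
    M = 0 := by
  by_contra hM0
  set q := M.content
  have hq0 : 0 < q := Nat.pos_of_ne_zero (mt content_eq_zero_iff.mp hM0)
  have hq3 : 3 ≤ q := hm.trans (Nat.le_of_dvd hq0 (dvd_content_iff.mpr hmM))
  have hqM : ∀ i j, (q : ℤ) ∣ M i j := dvd_content_iff.mp dvd_rfl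
  have hq2 : q ^ 2 ∣ p * q := by
    rw [← content_natCast_smul, dvd_content_iff]
    intro i j
    exact_mod_cast sq_dvd_natCast_mul_apply_of_one_add_pow_eq_one hp.pos h hqM i j
  have hqp : q = p := by
    have hqp : q ∣ p := Nat.dvd_of_mul_dvd_mul_right hq0 (by rwa [← sq])
    exact (hp.eq_one_or_self_of_dvd q hqp).resolve_left (by omega)
  have hp2 : p ^ 2 ∣ q := dvd_content_iff.mpr fun i j => by
    exact_mod_cast sq_dvd_apply_of_one_add_pow_prime_eq_one hp (by omega) h (hqp ▸ hqM) i j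
  have := Nat.le_of_dvd hq0 hp2
  nlinarith

end Matrix

namespace Matrix.GeneralLinearGroup

variable {n : Type*} [Fintype n] [DecidableEq n] {m : ℕ}

theorem dvd_sub_one_apply_of_mem_ker {A : GL n ℤ}
    (hA : A ∈ (map (Int.castRingHom (ZMod m))).ker) (i j : n) :
    (m : ℤ) ∣ ((A : Matrix n n ℤ) - 1) i j := by
  have hij := congr_arg (fun B : GL n (ZMod m) => B i j) (MonoidHom.mem_ker.mp hA)
  simp only [GeneralLinearGroup.map_apply, coe_one, eq_intCast] at hij
  rw [sub_apply, ← ZMod.intCast_zmod_eq_zero_iff_dvd]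
  rcases eq_or_ne i j with rfl | hij'
  · simp [hij]
  · simp [hij, hij']

theorem eq_one_of_mem_ker_of_pow_prime_eq_one (hm : 3 ≤ m) {A : GL n ℤ}
    (hA : A ∈ (map (Int.castRingHom (ZMod m))).ker) {p : ℕ} (hp : p.Prime) (hAp : A ^ p = 1) :
    A = 1 := by
  have hM : (A : Matrix n n ℤ) - 1 = 0 := by
    refine eq_zero_of_one_add_pow_prime_eq_one hm (dvd_sub_one_apply_of_mem_ker hA) hp ?_
    rw [add_sub_cancel, ← Units.val_pow_eq_pow_val, hAp, Units.val_one]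
  exact Units.ext (sub_eq_zero.mp hM)

end Matrix.GeneralLinearGroup

theorem ker_reduction_torsionFree_general (N : ℕ) (m : ℕ) (hm : 3 ≤ m)
    (A : GL (Fin N) ℤ)
    (hA : A ∈ (Matrix.GeneralLinearGroup.map (n := Fin N) (Int.castRingHom (ZMod m))).ker)
    (r : ℕ) (hr : 1 ≤ r) (hpow : A ^ r = 1) : A = 1 :=
  Submonoid.eq_one_of_isOfFinOrder_of_forall_pow_prime
    (S := (Matrix.GeneralLinearGroup.map (Int.castRingHom (ZMod m))).ker.toSubmonoid)
    (fun _ hB _ hp hBp =>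
      Matrix.GeneralLinearGroup.eq_one_of_mem_ker_of_pow_prime_eq_one hm hB hp hBp)
    hA (isOfFinOrder_iff_pow_eq_one.mpr ⟨r, hr, hpow⟩)

/-- Serre's lemma: for `m ≥ 3`, the kernel of the reduction map
`GL_N(ℤ) → GL_N(ℤ/mℤ)` is torsion-free. -/
theorem ker_reduction_torsionFree (N : ℕ) (hN : 1 ≤ N) (m : ℕ) (hm : 3 ≤ m)
    (A : GL (Fin N) ℤ)
    (hA : A ∈ (Matrix.GeneralLinearGroup.map (n := Fin N) (Int.castRingHom (ZMod m))).ker)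
    (r : ℕ) (hr : 1 ≤ r) (hpow : A ^ r = 1) : A = 1 :=
  ker_reduction_torsionFree_general N m hm A hA r hr hpow
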